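/- There exists an absolute constant C > 0 such that for every finite set A of real numbers with |A| ≥ 2, the number of 6-tuples (a₁,a₂,a₃,b₁,b₂,b₃) ∈ A⁶ such that 0,a₁,a₂,a₃ are pairwise distinct, 0,b₁,b₂,b₃ are pairwise distinct, and X(0,a₁,a₂,a₃) = X(0,b₁,b₂,b₃), is at most C·|A|⁴·log|A|. -/

import Mathlib

/-!
Since `X(0, a₁, a₂, a₃) · (a₂⁻¹ - a₁⁻¹) = a₃⁻¹ - a₂⁻¹`, the equation
`X(0, a₁, a₂, a₃) = X(0, b₁, b₂, b₃)` says that the three points `(aᵢ⁻¹, bᵢ⁻¹)` of the grid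
`B × B`, `B = A⁻¹`, are collinear. Hence `E₁(A)` is at most the number of collinear triples in
`B × B`, which is at most `∑ₗ |ℓ ∩ B × B|³` over the lines spanned by the grid.

For the grid, lines with at least `k` points number `O(|B|⁴ / k³)`: cut `B` into `r ≈ k / 4`
blocks of consecutive elements. A nonvertical line visits at most `2r - 1` of the `r²` cells,
because the cells it visits form a chain in the product order, so at least `k / 4` of its points
share a cell with another point of the line; such a pair of points determines the line, and
there are `O(r² (|B| / r)⁴)` such pairs. Summing `k² · |B|⁴ / k³` over `k ≤ |B|` gives
`|B|⁴ log |B|`.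
-/

/-- The cross ratio of four reals. -/
noncomputable def crossRatio (a b c d : ℝ) : ℝ := (a - b) * (c - d) / ((b - c) * (a - d))

open Finset

section Blocks

variable {α : Type*} [LinearOrder α]

theorem exists_monotone_blocks (B : Finset α) {r s : ℕ} (hs : 0 < s) (hB : #B ≤ r * s) :
    ∃ φ : α → ℕ, Monotone φ ∧ (∀ x ∈ B, φ x < r) ∧ ∀ i, #{x ∈ B | φ x = i} ≤ s := by
  let rank : α → ℕ := fun x => #{y ∈ B | y < x}
  have rank_strictMonoOn : StrictMonoOn rank B := fun x hx y _ hxy =>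
    card_lt_card ⟨monotone_filter_right _ fun _ _ h => h.trans hxy,
      fun h => by simpa using h (mem_filter.2 ⟨hx, hxy⟩)⟩
  have rank_lt_card : ∀ x ∈ B, rank x < #B := fun x hx =>
    card_lt_card ⟨filter_subset _ _, fun h => by simpa using h hx⟩
  refine ⟨fun x => rank x / s, fun x y hxy => Nat.div_le_div_right ?_, fun x hx => ?_, fun i => ?_⟩
  · exact card_le_card (monotone_filter_right _ fun _ _ h => h.trans_le hxy)
  · exact (Nat.div_lt_iff_lt_mul hs).2 ((rank_lt_card x hx).trans_le hB)
  · calc #{x ∈ B | rank x / s = i} ≤ #(Ico (i * s) (i * s + s)) := by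
          refine card_le_card_of_injOn rank (fun x hx => ?_)
            (rank_strictMonoOn.injOn.mono (filter_subset _ _))
          obtain ⟨-, rfl⟩ := mem_filter.1 hx
          exact mem_Ico.2 ⟨Nat.div_mul_le_self _ _, Nat.lt_div_mul_add hs⟩
      _ = s := by simp

theorem card_image_prod_le_of_monotoneOn {P : Finset α} {f g : α → ℕ} {r : ℕ}
    (hf : MonotoneOn f P) (hg : MonotoneOn g P) (hfr : ∀ x ∈ P, f x < r)
    (hgr : ∀ x ∈ P, g x < r) : #(P.image fun x => (f x, g x)) ≤ 2 * r - 1 := by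
  -- `i + j` is strictly monotone along a chain in the product order
  calc #(P.image fun x => (f x, g x)) ≤ #(range (2 * r - 1)) := by
        refine card_le_card_of_injOn (fun t => t.1 + t.2) ?_ ?_
        · intro t ht
          obtain ⟨x, hx, rfl⟩ := mem_image.1 ht
          rw [coe_range, Set.mem_Iio]
          dsimp only
          have := hfr x hx
          have := hgr x hx
          omega
        · simp only [coe_image, Set.InjOn, Set.forall_mem_image, Prod.mk.injEq]
          intro x hx y hy hxy
          rcases le_total x y with h | h
          · have := hf hx hy h
            have := hg hx hy h
            omega
          · have := hf hy hx h
            have := hg hy hx h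
            omega
    _ = 2 * r - 1 := card_range _

theorem card_image_prod_le_of_antitoneOn {P : Finset α} {f g : α → ℕ} {r : ℕ}
    (hf : MonotoneOn f P) (hg : AntitoneOn g P) (hfr : ∀ x ∈ P, f x < r)
    (hgr : ∀ x ∈ P, g x < r) : #(P.image fun x => (f x, g x)) ≤ 2 * r - 1 := by
  have flip_injOn :
      Set.InjOn (fun t : ℕ × ℕ => (t.1, r - 1 - t.2)) (P.image fun x => (f x, g x)) := by
    simp only [coe_image, Set.InjOn, Set.forall_mem_image, Prod.mk.injEq]
    intro x hx y hy ⟨h1, h2⟩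
    have := hgr x hx
    have := hgr y hy
    omega
  rw [← card_image_of_injOn flip_injOn, image_image]
  exact card_image_prod_le_of_monotoneOn hf (fun x hx y hy h => Nat.sub_le_sub_left (hg hx hy h) _)
    hfr fun x hx => by have := hgr x hx; omega

end Blocks

theorem card_le_card_image_add_card_filter_offDiag {α β : Type*} [DecidableEq α] [DecidableEq β]
    (P : Finset α) (f : α → β) : #P ≤ #(P.image f) + #{z ∈ P.offDiag | f z.1 = f z.2} := by
  have fiber_offDiag : ∀ t, {z ∈ {z ∈ P.offDiag | f z.1 = f z.2} | f z.1 = t} =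
      {x ∈ P | f x = t}.offDiag := fun t => by
    ext ⟨x, y⟩
    simp only [mem_filter, mem_offDiag]
    constructor
    · rintro ⟨⟨⟨hx, hy, hxy⟩, hf⟩, rfl⟩
      exact ⟨⟨hx, rfl⟩, ⟨hy, hf.symm⟩, hxy⟩
    · rintro ⟨⟨hx, rfl⟩, ⟨hy, hf⟩, hxy⟩
      exact ⟨⟨⟨hx, hy, hxy⟩, hf.symm⟩, rfl⟩
  rw [card_eq_sum_card_image f P, card_eq_sum_card_fiberwise (f := fun z => f z.1)
    (t := P.image f) fun z hz => mem_image_of_mem f (mem_offDiag.1 (mem_filter.1 hz).1).1,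
    card_eq_sum_ones (P.image f), ← sum_add_distrib]
  refine sum_le_sum fun t _ => ?_
  rw [fiber_offDiag, offDiag_card]
  set a := #{x ∈ P | f x = t}
  rcases Nat.lt_or_ge a 2 with h | h
  · interval_cases a <;> simp
  · have := Nat.mul_le_mul_right a h
    omega

/-- A nonvertical line `y = m * x + c` is encoded as `ℓ = (m, c)`; its points in `B ×ˢ B` are
recorded by their abscissas. -/
noncomputable def gridLine (B : Finset ℝ) (ℓ : ℝ × ℝ) : Finset ℝ := {x ∈ B | ℓ.1 * x + ℓ.2 ∈ B}

theorem card_gridLine_le (B : Finset ℝ) (ℓ : ℝ × ℝ) : #(gridLine B ℓ) ≤ #B :=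
  card_filter_le _ _

noncomputable def lineThrough (p q : ℝ × ℝ) : ℝ × ℝ :=
  ((q.2 - p.2) / (q.1 - p.1), p.2 - (q.2 - p.2) / (q.1 - p.1) * p.1)

theorem lineThrough_eval {p q r : ℝ × ℝ} (hpq : p.1 ≠ q.1)
    (hr : (q.1 - p.1) * (r.2 - q.2) = (q.2 - p.2) * (r.1 - q.1)) :
    (lineThrough p q).1 * r.1 + (lineThrough p q).2 = r.2 := by
  have : q.1 - p.1 ≠ 0 := sub_ne_zero.2 hpq.symm
  simp only [lineThrough]
  field_simp
  linear_combination -hr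

theorem line_ext_of_eval_eq {ℓ ℓ' : ℝ × ℝ} {x y : ℝ} (hxy : x ≠ y)
    (hx : ℓ.1 * x + ℓ.2 = ℓ'.1 * x + ℓ'.2) (hy : ℓ.1 * y + ℓ.2 = ℓ'.1 * y + ℓ'.2) : ℓ = ℓ' := by
  have hm : ℓ.1 = ℓ'.1 :=
    mul_right_cancel₀ (sub_ne_zero.2 hxy) (by linear_combination hx - hy)
  exact Prod.ext hm (by rw [hm] at hx; linarith)

section Cells

variable {B : Finset ℝ} {φ : ℝ → ℕ} {r s : ℕ}

theorem card_image_gridLine_le (hφ : Monotone φ) (hφr : ∀ x ∈ B, φ x < r) (ℓ : ℝ × ℝ) :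
    #((gridLine B ℓ).image fun x => (φ x, φ (ℓ.1 * x + ℓ.2))) ≤ 2 * r - 1 := by
  have hfr : ∀ x ∈ gridLine B ℓ, φ x < r := fun x hx => hφr x (mem_filter.1 hx).1
  have hgr : ∀ x ∈ gridLine B ℓ, φ (ℓ.1 * x + ℓ.2) < r := fun x hx => hφr _ (mem_filter.1 hx).2
  rcases le_total 0 ℓ.1 with h | h
  · have : Monotone fun x => ℓ.1 * x + ℓ.2 := fun x y hxy => by
      dsimp only; linarith [mul_le_mul_of_nonneg_left hxy h]
    exact card_image_prod_le_of_monotoneOn (hφ.monotoneOn _) ((hφ.comp this).monotoneOn _) hfr hgr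
  · have : Antitone fun x => ℓ.1 * x + ℓ.2 := fun x y hxy => by
      dsimp only; linarith [mul_le_mul_of_nonpos_left hxy h]
    exact card_image_prod_le_of_antitoneOn (hφ.monotoneOn _) ((hφ.comp_antitone this).antitoneOn _)
      hfr hgr

theorem card_filter_prodMap_eq_le (hφr : ∀ x ∈ B, φ x < r) (hφs : ∀ i, #{x ∈ B | φ x = i} ≤ s) :
    #{z ∈ (B ×ˢ B) ×ˢ (B ×ˢ B) | Prod.map φ φ z.1 = Prod.map φ φ z.2} ≤ r ^ 2 * s ^ 4 := by
  let cell : ℕ × ℕ → Finset (ℝ × ℝ) := fun t => {x ∈ B | φ x = t.1} ×ˢ {y ∈ B | φ y = t.2}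
  calc _ ≤ #((range r ×ˢ range r).biUnion fun t => cell t ×ˢ cell t) := by
        refine card_le_card fun z hz => ?_
        obtain ⟨⟨⟨hp₁, hp₂⟩, hq₁, hq₂⟩, hpq⟩ := by simpa only [mem_filter, mem_product] using hz
        simp only [Prod.map, Prod.mk.injEq] at hpq
        simp only [mem_biUnion, mem_product, mem_range, mem_filter, cell]
        exact ⟨Prod.map φ φ z.1, ⟨hφr _ hp₁, hφr _ hp₂⟩,
          ⟨⟨hp₁, rfl⟩, hp₂, rfl⟩, ⟨hq₁, hpq.1.symm⟩, hq₂, hpq.2.symm⟩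
    _ ≤ ∑ t ∈ range r ×ˢ range r, #(cell t ×ˢ cell t) := card_biUnion_le
    _ ≤ ∑ t ∈ range r ×ˢ range r, s ^ 4 := sum_le_sum fun t _ => by
        simp only [cell, card_product]
        calc _ ≤ s * s * (s * s) := by gcongr <;> apply hφs
          _ = s ^ 4 := by ring
    _ = r ^ 2 * s ^ 4 := by simp [sq]

theorem sum_card_sameCell_gridLine_le (L : Finset (ℝ × ℝ)) :
    ∑ ℓ ∈ L, #{z ∈ (gridLine B ℓ).offDiag |
        (φ z.1, φ (ℓ.1 * z.1 + ℓ.2)) = (φ z.2, φ (ℓ.1 * z.2 + ℓ.2))} ≤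
      #{z ∈ (B ×ˢ B) ×ˢ (B ×ˢ B) | Prod.map φ φ z.1 = Prod.map φ φ z.2} := by
  rw [← card_sigma]
  refine card_le_card_of_injOn
    (fun w => ((w.2.1, w.1.1 * w.2.1 + w.1.2), (w.2.2, w.1.1 * w.2.2 + w.1.2))) ?_ ?_
  · rintro ⟨ℓ, x, y⟩ hw
    simp only [coe_sigma, Set.mem_sigma_iff, mem_coe, mem_filter, mem_offDiag, gridLine] at hw
    obtain ⟨-, ⟨⟨hx, hℓx⟩, ⟨hy, hℓy⟩, -⟩, hcell⟩ := hw
    simp only [mem_coe, mem_filter, mem_product, Prod.map]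
    exact ⟨⟨⟨hx, hℓx⟩, hy, hℓy⟩, hcell⟩
  · rintro ⟨ℓ, x, y⟩ hw ⟨ℓ', x', y'⟩ - h
    simp only [coe_sigma, Set.mem_sigma_iff, mem_coe, mem_filter, mem_offDiag] at hw
    simp only [Prod.mk.injEq] at h
    obtain ⟨⟨rfl, hx⟩, rfl, hy⟩ := h
    rw [line_ext_of_eval_eq hw.2.1.2.2 hx hy]

theorem sum_card_gridLine_le (hφ : Monotone φ) (hφr : ∀ x ∈ B, φ x < r)
    (hφs : ∀ i, #{x ∈ B | φ x = i} ≤ s) (L : Finset (ℝ × ℝ)) :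
    ∑ ℓ ∈ L, #(gridLine B ℓ) ≤ (2 * r - 1) * #L + r ^ 2 * s ^ 4 := by
  refine (sum_le_sum fun ℓ _ => (card_le_card_image_add_card_filter_offDiag _ _).trans
    (Nat.add_le_add_right (card_image_gridLine_le hφ hφr ℓ) _)).trans ?_
  rw [sum_add_distrib, sum_const, smul_eq_mul, mul_comm]
  gcongr
  exact (sum_card_sameCell_gridLine_le L).trans (card_filter_prodMap_eq_le hφr hφs)

end Cells

theorem pow_three_mul_card_le_of_le_card_gridLine {B : Finset ℝ} {L : Finset (ℝ × ℝ)} {k : ℕ}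
    (hk : 4 ≤ k) (hkB : k ≤ #B) (hL : ∀ ℓ ∈ L, k ≤ #(gridLine B ℓ)) :
    k ^ 3 * #L ≤ 1024 * #B ^ 4 := by
  set n := #B
  -- with `r = ⌈k / 4⌉` a line visits at most `2r - 1 ≤ 3k / 4` cells
  set r := (k + 3) / 4 with hr
  set s := n / r + 1 with hs
  have hr0 : 0 < r := by omega
  have hnrs : n ≤ r * s := (Nat.lt_mul_div_succ n hr0).le
  have hrsn : r * s ≤ 2 * n := by
    have := Nat.mul_div_le n r
    rw [hs, mul_add_one]
    omega
  obtain ⟨φ, hφ, hφr, hφs⟩ := exists_monotone_blocks B (Nat.succ_pos _) hnrs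
  have hinc : k * #L ≤ (2 * r - 1) * #L + r ^ 2 * s ^ 4 := by
    rw [mul_comm, ← smul_eq_mul]
    exact (card_nsmul_le_sum L _ k hL).trans (sum_card_gridLine_le hφ hφr hφs L)
  have hrich : k * #L ≤ 4 * (r ^ 2 * s ^ 4) := by
    have : 4 * ((2 * r - 1) * #L) ≤ 3 * (k * #L) := by
      rw [← mul_assoc, ← mul_assoc]
      exact Nat.mul_le_mul_right _ (by omega)
    omega
  calc k ^ 3 * #L = k ^ 2 * (k * #L) := by ring
    _ ≤ (4 * r) ^ 2 * (4 * (r ^ 2 * s ^ 4)) := by gcongr; omega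
    _ = 64 * (r * s) ^ 4 := by ring
    _ ≤ 64 * (2 * n) ^ 4 := by gcongr
    _ = 1024 * n ^ 4 := by ring

/-- Pairs with equal abscissas give junk lines (division by zero); they only enlarge the set. -/
noncomputable def gridLines (B : Finset ℝ) : Finset (ℝ × ℝ) := image₂ lineThrough (B ×ˢ B) (B ×ˢ B)

theorem pow_three_mul_card_filter_gridLines_le (B : Finset ℝ) (k : ℕ) :
    k ^ 3 * #{ℓ ∈ gridLines B | k ≤ #(gridLine B ℓ)} ≤ 1024 * #B ^ 4 := by
  rcases le_or_gt k 4 with hk | hk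
  · calc k ^ 3 * #{ℓ ∈ gridLines B | k ≤ #(gridLine B ℓ)} ≤ 4 ^ 3 * (#B * #B * (#B * #B)) := by
          gcongr
          exact (card_filter_le _ _).trans
            ((card_image₂_le _ _ _).trans_eq (by simp [card_product]))
      _ ≤ 1024 * #B ^ 4 := by ring_nf; omega
  rcases le_or_gt k #B with hkB | hkB
  · exact pow_three_mul_card_le_of_le_card_gridLine hk.le hkB fun ℓ hℓ => (mem_filter.1 hℓ).2
  · have : {ℓ ∈ gridLines B | k ≤ #(gridLine B ℓ)} = ∅ :=
      filter_false_of_mem fun ℓ _ => (card_gridLine_le B ℓ).trans_lt hkB |>.not_ge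
    simp [this]

theorem pow_three_le_three_mul_sum_sq (N : ℕ) : N ^ 3 ≤ 3 * ∑ k ∈ Icc 1 N, k ^ 2 := by
  induction N with
  | zero => simp
  | succ n ih =>
    rw [sum_Icc_succ_top (by omega)]
    linarith [show (n + 1) ^ 3 = n ^ 3 + 3 * n ^ 2 + 3 * n + 1 by ring,
      show (n + 1) ^ 2 = n ^ 2 + 2 * n + 1 by ring]

theorem sum_pow_three_le_mul_harmonic {ι : Type*} (L : Finset ι) (N : ι → ℕ) {n : ℕ} {M : ℝ}
    (hN : ∀ i ∈ L, N i ≤ n) (hM : ∀ k : ℕ, (k : ℝ) ^ 3 * #{i ∈ L | k ≤ N i} ≤ M) :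
    ∑ i ∈ L, (N i : ℝ) ^ 3 ≤ 3 * M * harmonic n := by
  have layer : ∀ i ∈ L, (N i : ℝ) ^ 3 ≤ 3 * ∑ k ∈ Icc 1 n, if k ≤ N i then (k : ℝ) ^ 2 else 0 := by
    intro i hi
    have hIcc : {k ∈ Icc 1 n | k ≤ N i} = Icc 1 (N i) := by
      ext k
      simp only [mem_filter, mem_Icc]
      have := hN i hi
      omega
    rw [← sum_filter, hIcc]
    exact_mod_cast pow_three_le_three_mul_sum_sq (N i)
  calc ∑ i ∈ L, (N i : ℝ) ^ 3
      ≤ ∑ i ∈ L, 3 * ∑ k ∈ Icc 1 n, if k ≤ N i then (k : ℝ) ^ 2 else 0 := sum_le_sum layer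
    _ = 3 * ∑ k ∈ Icc 1 n, (k : ℝ) ^ 2 * #{i ∈ L | k ≤ N i} := by
        rw [← mul_sum, sum_comm]
        congr 1
        refine sum_congr rfl fun k _ => ?_
        rw [← sum_filter, sum_const, nsmul_eq_mul, mul_comm]
    _ ≤ 3 * ∑ k ∈ Icc 1 n, M * (k : ℝ)⁻¹ := by
        refine mul_le_mul_of_nonneg_left (sum_le_sum fun k hk => ?_) (by norm_num)
        have hk : (0 : ℝ) < k := by exact_mod_cast (mem_Icc.1 hk).1
        rw [← div_eq_mul_inv, le_div_iff₀ hk]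
        linear_combination hM k
    _ = 3 * M * harmonic n := by
        rw [harmonic_eq_sum_Icc, ← mul_sum]
        push_cast
        ring

theorem harmonic_mono : Monotone harmonic := fun m n hmn => by
  simp only [harmonic_eq_sum_Icc]
  exact sum_le_sum_of_subset_of_nonneg (Icc_subset_Icc_right hmn) fun _ _ _ => by positivity

theorem harmonic_nonneg (n : ℕ) : 0 ≤ harmonic n :=
  harmonic_zero ▸ harmonic_mono n.zero_le

open scoped Classical in
noncomputable def collinearTriples (B : Finset ℝ) : Finset ((ℝ × ℝ) × (ℝ × ℝ) × (ℝ × ℝ)) :=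
  ((B ×ˢ B) ×ˢ (B ×ˢ B) ×ˢ (B ×ˢ B)).filter fun ⟨p, q, r⟩ =>
    p.1 ≠ q.1 ∧ (q.1 - p.1) * (r.2 - q.2) = (q.2 - p.2) * (r.1 - q.1)

theorem card_collinearTriples_le_sum (B : Finset ℝ) :
    #(collinearTriples B) ≤ ∑ ℓ ∈ gridLines B, #(gridLine B ℓ) ^ 3 := by
  have hcube : ∀ ℓ, #(gridLine B ℓ) ^ 3 = #(gridLine B ℓ ×ˢ gridLine B ℓ ×ˢ gridLine B ℓ) := by
    intro ℓ
    simp only [card_product]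
    ring
  simp only [hcube, ← card_sigma]
  refine card_le_card_of_injOn (fun t => ⟨lineThrough t.1 t.2.1, t.1.1, t.2.1.1, t.2.2.1⟩) ?_ ?_
  · rintro ⟨p, q, r⟩ ht
    simp only [collinearTriples, mem_coe, mem_filter, mem_product] at ht
    obtain ⟨⟨⟨hp₁, hp₂⟩, ⟨hq₁, hq₂⟩, hr₁, hr₂⟩, hpq, hcol⟩ := ht
    simp only [coe_sigma, Set.mem_sigma_iff, mem_coe, mem_product, gridLine, mem_filter]
    refine ⟨mem_image₂_of_mem (mem_product.2 ⟨hp₁, hp₂⟩) (mem_product.2 ⟨hq₁, hq₂⟩),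
      ⟨hp₁, ?_⟩, ⟨hq₁, ?_⟩, hr₁, ?_⟩
    · rwa [lineThrough_eval hpq (by ring)]
    · rwa [lineThrough_eval hpq (by ring)]
    · rwa [lineThrough_eval hpq hcol]
  · rintro ⟨p, q, r⟩ ht ⟨p', q', r'⟩ ht' h
    simp only [collinearTriples, mem_coe, mem_filter] at ht ht'
    simp only [Sigma.mk.injEq, heq_eq_eq, Prod.mk.injEq] at h
    obtain ⟨hℓ, hp, hq, hr⟩ := h
    have eq_of_fst_eq : ∀ {x x' : ℝ × ℝ}, x.1 = x'.1 →
        (q.1 - p.1) * (x.2 - q.2) = (q.2 - p.2) * (x.1 - q.1) →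
        (q'.1 - p'.1) * (x'.2 - q'.2) = (q'.2 - p'.2) * (x'.1 - q'.1) → x = x' :=
      fun h₁ hx hx' => Prod.ext h₁ <| by
        rw [← lineThrough_eval ht.2.1 hx, ← lineThrough_eval ht'.2.1 hx', hℓ, h₁]
    simp only [Prod.mk.injEq]
    exact ⟨eq_of_fst_eq hp (by ring) (by ring), eq_of_fst_eq hq (by ring) (by ring),
      eq_of_fst_eq hr ht.2.2 ht'.2.2⟩

theorem card_collinearTriples_le (B : Finset ℝ) :
    (#(collinearTriples B) : ℝ) ≤ 3072 * #B ^ 4 * harmonic #B :=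
  calc (#(collinearTriples B) : ℝ) ≤ ∑ ℓ ∈ gridLines B, (#(gridLine B ℓ) : ℝ) ^ 3 := by
        exact_mod_cast card_collinearTriples_le_sum B
    _ ≤ 3 * (1024 * #B ^ 4) * harmonic #B :=
        sum_pow_three_le_mul_harmonic _ _ (fun ℓ _ => card_gridLine_le B ℓ) fun k => by
          exact_mod_cast pow_three_mul_card_filter_gridLines_le B k
    _ = 3072 * #B ^ 4 * harmonic #B := by ring

theorem crossRatio_zero_mul_inv_sub_inv {a b c : ℝ} (ha : a ≠ 0) (hb : b ≠ 0) (hc : c ≠ 0)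
    (hab : a ≠ b) : crossRatio 0 a b c * (b⁻¹ - a⁻¹) = c⁻¹ - b⁻¹ := by
  have : a - b ≠ 0 := sub_ne_zero.2 hab
  unfold crossRatio
  field_simp
  ring

noncomputable def energyTuples (A : Finset ℝ) : Finset (ℝ × ℝ × ℝ × ℝ × ℝ × ℝ) :=
  (A ×ˢ A ×ˢ A ×ˢ A ×ˢ A ×ˢ A).filter fun ⟨a₁, a₂, a₃, b₁, b₂, b₃⟩ =>
    (a₁ ≠ 0 ∧ a₂ ≠ 0 ∧ a₃ ≠ 0 ∧ a₁ ≠ a₂ ∧ a₁ ≠ a₃ ∧ a₂ ≠ a₃) ∧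
    (b₁ ≠ 0 ∧ b₂ ≠ 0 ∧ b₃ ≠ 0 ∧ b₁ ≠ b₂ ∧ b₁ ≠ b₃ ∧ b₂ ≠ b₃) ∧
    crossRatio 0 a₁ a₂ a₃ = crossRatio 0 b₁ b₂ b₃

theorem card_energyTuples_le (A : Finset ℝ) :
    #(energyTuples A) ≤ #(collinearTriples (A.image (·⁻¹))) := by
  refine card_le_card_of_injOn
    (fun ⟨a₁, a₂, a₃, b₁, b₂, b₃⟩ => ((a₁⁻¹, b₁⁻¹), (a₂⁻¹, b₂⁻¹), (a₃⁻¹, b₃⁻¹))) ?_ ?_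
  · rintro ⟨a₁, a₂, a₃, b₁, b₂, b₃⟩ ht
    simp only [energyTuples, mem_coe, mem_filter, mem_product] at ht
    obtain ⟨⟨h₁, h₂, h₃, h₄, h₅, h₆⟩, ⟨ha₁, ha₂, ha₃, ha₁₂, -, -⟩,
      ⟨hb₁, hb₂, hb₃, hb₁₂, -, -⟩, hX⟩ := ht
    simp only [collinearTriples, mem_coe, mem_filter, mem_product]
    refine ⟨⟨⟨mem_image_of_mem _ h₁, mem_image_of_mem _ h₄⟩, ⟨mem_image_of_mem _ h₂,
      mem_image_of_mem _ h₅⟩, mem_image_of_mem _ h₃, mem_image_of_mem _ h₆⟩,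
      inv_injective.ne ha₁₂, ?_⟩
    rw [← crossRatio_zero_mul_inv_sub_inv ha₁ ha₂ ha₃ ha₁₂,
      ← crossRatio_zero_mul_inv_sub_inv hb₁ hb₂ hb₃ hb₁₂, hX]
    ring
  · rintro ⟨a₁, a₂, a₃, b₁, b₂, b₃⟩ - ⟨a₁', a₂', a₃', b₁', b₂', b₃'⟩ - h
    simp only [Prod.mk.injEq, inv_inj] at h ⊢
    tauto

/-- **Bound on the energy `E₁(A)`.** There is an absolute constant `C > 0` such that for
every finite `A ⊆ ℝ` with `|A| ≥ 2`, the number of 6-tuples `(a₁,a₂,a₃,b₁,b₂,b₃) ∈ A⁶`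
with `0,a₁,a₂,a₃` pairwise distinct, `0,b₁,b₂,b₃` pairwise distinct and
`X(0,a₁,a₂,a₃) = X(0,b₁,b₂,b₃)` is at most `C·|A|⁴·log|A|`. -/
theorem energy_E1_bound :
    ∃ C : ℝ, 0 < C ∧ ∀ A : Finset ℝ, 2 ≤ A.card →
      (((A ×ˢ A ×ˢ A ×ˢ A ×ˢ A ×ˢ A).filter
          (fun t : ℝ × ℝ × ℝ × ℝ × ℝ × ℝ =>
            (t.1 ≠ 0 ∧ t.2.1 ≠ 0 ∧ t.2.2.1 ≠ 0 ∧
              t.1 ≠ t.2.1 ∧ t.1 ≠ t.2.2.1 ∧ t.2.1 ≠ t.2.2.1) ∧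
            (t.2.2.2.1 ≠ 0 ∧ t.2.2.2.2.1 ≠ 0 ∧ t.2.2.2.2.2 ≠ 0 ∧
              t.2.2.2.1 ≠ t.2.2.2.2.1 ∧ t.2.2.2.1 ≠ t.2.2.2.2.2 ∧
              t.2.2.2.2.1 ≠ t.2.2.2.2.2) ∧
            crossRatio 0 t.1 t.2.1 t.2.2.1 =
              crossRatio 0 t.2.2.2.1 t.2.2.2.2.1 t.2.2.2.2.2)).card : ℝ) ≤
        C * (A.card : ℝ) ^ 4 * Real.log (A.card : ℝ) := by
  refine ⟨9216, by norm_num, fun A hA => ?_⟩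
  change (#(energyTuples A) : ℝ) ≤ _
  set B := A.image (·⁻¹)
  have hBA : #B ≤ #A := card_image_le
  have hlog : 1 ≤ 2 * Real.log #A := by
    have : Real.log 2 ≤ Real.log #A := Real.log_le_log two_pos (by exact_mod_cast hA)
    linarith [Real.log_two_gt_d9]
  calc (#(energyTuples A) : ℝ) ≤ #(collinearTriples B) := by
        exact_mod_cast card_energyTuples_le A
    _ ≤ 3072 * #B ^ 4 * harmonic #B := card_collinearTriples_le B
    _ ≤ 3072 * #A ^ 4 * harmonic #A := by
        have : (0 : ℝ) ≤ harmonic #B := by exact_mod_cast harmonic_nonneg #B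
        gcongr
        exact_mod_cast harmonic_mono hBA
    _ ≤ 3072 * #A ^ 4 * (1 + Real.log #A) := by
        gcongr
        exact harmonic_le_one_add_log _
    _ ≤ 9216 * #A ^ 4 * Real.log #A := by
        have : (0 : ℝ) ≤ #A ^ 4 := by positivity
        nlinarith
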